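/- arXiv:2003.05599 — 3 statements merged into one kernel-verified Lean document; each statement's English description precedes it below -/
import Mathlib

section
/- Suppose X ∼ Beta(αε, α(1−ε)) with αε ≤ 1 and α(1−ε) ≥ 1. Then there is a constant C_α depending only on α such that P(X > t) ≤ C_α (1 − t^{αε}) for all t ∈ [0,1]. -/
/-!
For `b ≥ 1` the factor `(1 - x)^(b-1)` of the Beta density is at most `1`, so the density is at
most `x^(a-1) / B(a,b)` and `P(X > t) ≤ (1 - t^a) / (a B(a,b))`. On `[0, 1/2]` that
factor is at least `2^(1-b)`, which gives `a B(a,b) ≥ 2^(1-a-b)`. Hence `C = 2^(α-1)` works,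
since `a + b = α`.
-/

open MeasureTheory ENNReal

/-- The Beta(a,b) distribution on `[0,1]`, given by its density
`Γ(a+b)/(Γ(a)Γ(b)) x^(a-1) (1-x)^(b-1)` with respect to Lebesgue measure. -/
noncomputable def betaMeasure (a b : ℝ) : Measure ℝ :=
  volume.withDensity (fun x => ENNReal.ofReal
    ((Set.Ioo (0 : ℝ) 1).indicator
      (fun y => Real.Gamma (a + b) / (Real.Gamma a * Real.Gamma b)
        * y ^ (a - 1) * (1 - y) ^ (b - 1)) x))

open Set

lemma betaMeasure_eq_probabilityTheory_betaMeasure (a b : ℝ) :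
    betaMeasure a b = ProbabilityTheory.betaMeasure a b := by
  refine congrArg volume.withDensity (funext fun x => ?_)
  simp only [ProbabilityTheory.betaPDF, ProbabilityTheory.betaPDFReal, indicator, mem_Ioo,
    ProbabilityTheory.beta, one_div_div]

namespace ProbabilityTheory

lemma beta_integrand_nonneg {a b x : ℝ} (hx : x ∈ Icc (0 : ℝ) 1) :
    0 ≤ x ^ (a - 1) * (1 - x) ^ (b - 1) :=
  mul_nonneg (Real.rpow_nonneg hx.1 _) (Real.rpow_nonneg (sub_nonneg.2 hx.2) _)

lemma beta_integrand_ofReal {a b x : ℝ} (hx : x ∈ Icc (0 : ℝ) 1) :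
    (x : ℂ) ^ ((a : ℂ) - 1) * (1 - (x : ℂ)) ^ ((b : ℂ) - 1)
      = ((x ^ (a - 1) * (1 - x) ^ (b - 1) : ℝ) : ℂ) := by
  rw [Complex.ofReal_mul, Complex.ofReal_cpow hx.1, Complex.ofReal_cpow (sub_nonneg.2 hx.2)]
  push_cast
  rfl

lemma intervalIntegrable_beta_integrand {a b : ℝ} (ha : 0 < a) (hb : 0 < b) :
    IntervalIntegrable (fun x : ℝ => x ^ (a - 1) * (1 - x) ^ (b - 1)) volume 0 1 := by
  refine (Complex.betaIntegral_convergent (u := a) (v := b) (by simpa) (by simpa)).norm.congr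
    fun x hx => ?_
  have hx : x ∈ Icc (0 : ℝ) 1 := uIcc_of_le (zero_le_one' ℝ) ▸ uIoc_subset_uIcc hx
  rw [beta_integrand_ofReal hx, Complex.norm_real,
    Real.norm_of_nonneg (beta_integrand_nonneg hx)]

lemma beta_eq_integral {a b : ℝ} (ha : 0 < a) (hb : 0 < b) :
    beta a b = ∫ x in (0 : ℝ)..1, x ^ (a - 1) * (1 - x) ^ (b - 1) := by
  rw [beta_eq_betaIntegralReal a b ha hb, Complex.betaIntegral,
    intervalIntegral.integral_congr fun x hx =>
      beta_integrand_ofReal (uIcc_of_le (zero_le_one' ℝ) ▸ hx),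
    intervalIntegral.integral_ofReal, Complex.ofReal_re]

lemma half_rpow_div_le_beta {a b : ℝ} (ha : 0 < a) (hb : 1 ≤ b) :
    (1 / 2 : ℝ) ^ (a + b - 1) / a ≤ beta a b := by
  have hf := intervalIntegrable_beta_integrand ha (zero_lt_one.trans_le hb)
  have hhalf : ∀ x ∈ Icc (0 : ℝ) (1 / 2),
      (1 / 2 : ℝ) ^ (b - 1) * x ^ (a - 1) ≤ x ^ (a - 1) * (1 - x) ^ (b - 1) := fun x hx => by
    rw [mul_comm]
    gcongr
    · exact Real.rpow_nonneg hx.1 _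
    · linarith [hx.2]
  calc (1 / 2 : ℝ) ^ (a + b - 1) / a
      = ∫ x in (0 : ℝ)..(1 / 2), (1 / 2 : ℝ) ^ (b - 1) * x ^ (a - 1) := by
        rw [intervalIntegral.integral_const_mul, integral_rpow (Or.inl (by linarith)),
          sub_add_cancel, Real.zero_rpow ha.ne', sub_zero, ← mul_div_assoc,
          ← Real.rpow_add (by norm_num)]
        ring_nf
    _ ≤ ∫ x in (0 : ℝ)..(1 / 2), x ^ (a - 1) * (1 - x) ^ (b - 1) :=
        intervalIntegral.integral_mono_on (by norm_num)
          ((intervalIntegral.intervalIntegrable_rpow' (by linarith)).const_mul _)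
          (hf.mono_set (uIcc_subset_uIcc_left (by norm_num))) hhalf
    _ ≤ ∫ x in (0 : ℝ)..1, x ^ (a - 1) * (1 - x) ^ (b - 1) :=
        intervalIntegral.integral_mono_interval le_rfl (by norm_num) (by norm_num)
          (ae_restrict_of_forall_mem measurableSet_Ioc fun x hx =>
            beta_integrand_nonneg (Ioc_subset_Icc_self hx)) hf
    _ = beta a b := (beta_eq_integral ha (zero_lt_one.trans_le hb)).symm

lemma inv_mul_beta_le_two_rpow {a b : ℝ} (ha : 0 < a) (hb : 1 ≤ b) :
    (a * beta a b)⁻¹ ≤ 2 ^ (a + b - 1) := by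
  have h := half_rpow_div_le_beta ha hb
  rw [div_le_iff₀' ha, one_div, Real.inv_rpow zero_le_two] at h
  exact inv_le_of_inv_le₀ (by positivity) h

lemma betaPDF_le_indicator {a b x : ℝ} (ha : 0 < a) (hb : 1 ≤ b) :
    betaPDF a b x ≤ (Iio 1).indicator (fun x => ENNReal.ofReal (x ^ (a - 1) / beta a b)) x := by
  rcases le_or_gt x 0 with hx0 | hx0
  · simp [betaPDF_eq_zero_of_nonpos hx0]
  rcases le_or_gt 1 x with hx1 | hx1
  · simp [betaPDF_eq_zero_of_one_le hx1]
  rw [betaPDF_of_pos_lt_one hx0 hx1, indicator_of_mem (show x ∈ Iio 1 from hx1)]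
  have hB := beta_pos ha (zero_lt_one.trans_le hb)
  refine ENNReal.ofReal_le_ofReal <| (mul_le_of_le_one_right
    (mul_nonneg (one_div_pos.2 hB).le (Real.rpow_nonneg hx0.le _)) ?_).trans_eq
    (one_div_mul_eq_div _ _)
  exact Real.rpow_le_one (by linarith) (by linarith) (by linarith)

lemma betaMeasure_Ioi_le {a b t : ℝ} (ha : 0 < a) (hb : 1 ≤ b) (ht0 : 0 ≤ t) (ht1 : t ≤ 1) :
    betaMeasure a b (Ioi t) ≤ ENNReal.ofReal ((1 - t ^ a) / (a * beta a b)) := by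
  set B := beta a b
  have hint : IntegrableOn (fun x : ℝ => x ^ (a - 1) / B) (Ioo t 1) := by
    have := intervalIntegral.intervalIntegrable_rpow' (r := a - 1) (a := t) (b := 1) (by linarith)
    exact ((intervalIntegrable_iff_integrableOn_Ioo_of_le ht1).1 this).div_const B
  have hnonneg : 0 ≤ᵐ[volume.restrict (Ioo t 1)] fun x : ℝ => x ^ (a - 1) / B :=
    ae_restrict_of_forall_mem measurableSet_Ioo fun x hx =>
      div_nonneg (Real.rpow_nonneg (ht0.trans hx.1.le) _)
        (beta_pos ha (zero_lt_one.trans_le hb)).le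
  rw [betaMeasure, withDensity_apply _ measurableSet_Ioi]
  calc ∫⁻ x in Ioi t, betaPDF a b x
      ≤ ∫⁻ x in Ioi t, (Iio 1).indicator (fun x => ENNReal.ofReal (x ^ (a - 1) / B)) x :=
        lintegral_mono fun x => betaPDF_le_indicator ha hb
    _ = ∫⁻ x in Ioo t 1, ENNReal.ofReal (x ^ (a - 1) / B) := by
        rw [lintegral_indicator measurableSet_Iio, Measure.restrict_restrict measurableSet_Iio,
          Iio_inter_Ioi]
    _ = ENNReal.ofReal (∫ x in Ioo t 1, x ^ (a - 1) / B) :=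
        (ofReal_integral_eq_lintegral_ofReal hint hnonneg).symm
    _ = ENNReal.ofReal ((1 - t ^ a) / (a * B)) := by
        rw [← integral_Ioc_eq_integral_Ioo, ← intervalIntegral.integral_of_le ht1,
          intervalIntegral.integral_div, integral_rpow (Or.inl (by linarith)), sub_add_cancel,
          Real.one_rpow, div_div]

end ProbabilityTheory

theorem beta_tail_bound_general (α : ℝ) :
    ∃ C : ℝ, 0 < C ∧
      ∀ ε : ℝ, 0 < ε → ε < 1 → α * ε ≤ 1 → 1 ≤ α * (1 - ε) →
        ∀ t : ℝ, t ∈ Set.Icc (0 : ℝ) 1 →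
          betaMeasure (α * ε) (α * (1 - ε)) (Set.Ioi t)
            ≤ ENNReal.ofReal (C * (1 - t ^ (α * ε))) := by
  refine ⟨2 ^ (α - 1), by positivity, fun ε hε0 hε1 _ hb t ht => ?_⟩
  have ha : 0 < α * ε :=
    mul_pos (pos_of_mul_pos_left (one_pos.trans_le hb) (sub_nonneg.2 hε1.le)) hε0
  have hC : (α * ε * ProbabilityTheory.beta (α * ε) (α * (1 - ε)))⁻¹ ≤ 2 ^ (α - 1) := by
    simpa only [show α * ε + α * (1 - ε) = α by ring] using
      ProbabilityTheory.inv_mul_beta_le_two_rpow ha hb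
  rw [betaMeasure_eq_probabilityTheory_betaMeasure]
  refine (ProbabilityTheory.betaMeasure_Ioi_le ha hb ht.1 ht.2).trans (ENNReal.ofReal_le_ofReal ?_)
  rw [div_eq_inv_mul]
  exact mul_le_mul_of_nonneg_right hC (sub_nonneg.2 (Real.rpow_le_one ht.1 ht.2 ha.le))

/-- If `X ∼ Beta(αε, α(1-ε))` with `αε ≤ 1` and `α(1-ε) ≥ 1`, then there is a
constant `C_α` depending only on `α` such that `P(X > t) ≤ C_α (1 - t^{αε})`
for all `t ∈ [0,1]`. -/
theorem beta_tail_bound (α : ℝ) (hα : 0 < α) :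
    ∃ C : ℝ, 0 < C ∧
      ∀ ε : ℝ, 0 < ε → ε < 1 → α * ε ≤ 1 → 1 ≤ α * (1 - ε) →
        ∀ t : ℝ, t ∈ Set.Icc (0 : ℝ) 1 →
          betaMeasure (α * ε) (α * (1 - ε)) (Set.Ioi t)
            ≤ ENNReal.ofReal (C * (1 - t ^ (α * ε))) :=
  beta_tail_bound_general α
end

section
/- Let P and Q be probability measures supported on (−1,1], and let 𝒫_l be the natural partition of (−1,1] into 2^l half-open intervals of equal length 2^{1−l}. Then for every integer L ≥ 1 and every p ≥ 1, W_p^p(P, Q) ≤ κ_p ( Σ_{l=1}^L 2^{−lp} Σ_{F ∈ 𝒫_l} |P(F) − Q(F)| + 2^{−Lp} ), where κ_p is a constant depending only on p. -/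
/-!
`W_p^p(P, Q)` is bounded by the cost of a coupling built recursively along the dyadic tree of an
interval `I = (c, c + len]`: couple the two halves `A`, `B` of `I` recursively, then pair the
mass they leave unmatched by a rescaled product measure, which moves each unit of mass by at
most `len`. The halves match `min (μ A) (ν A) + min (μ B) (ν B)`, which falls short of
`min (μ I) (ν I)` by at most `|μ A - ν A| + |μ B - ν B|`, so level `l` of the tree contributes at
most `(len / 2 ^ l) ^ p` times the discrepancy of the cells of level `l + 1`, and the leaves at
depth `L` contribute at most `(len / 2 ^ L) ^ p`. For `I = (-1, 1]` this gives `κ_p = 4 ^ p`.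
-/

open MeasureTheory ENNReal

/-- `WpPow p P Q`: the `p`-th power of the order-`p` Wasserstein distance,
as the infimum over couplings of `∫ |x-y|^p dπ`. -/
noncomputable def WpPow (p : ℝ) (P Q : Measure ℝ) : ℝ≥0∞ :=
  ⨅ (π : Measure (ℝ × ℝ)) (_ : π.map Prod.fst = P) (_ : π.map Prod.snd = Q),
    ∫⁻ z, ENNReal.ofReal (|z.1 - z.2| ^ p) ∂π

/-- The `j`-th cell (for `j = 0, …, 2^l - 1`) of the natural partition `𝒫_l` of
`(-1,1]` into `2^l` half-open intervals of length `2^(1-l)`. -/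
noncomputable def dyadicCell (l j : ℕ) : Set ℝ :=
  Set.Ioc (-1 + j * (2 : ℝ) ^ ((1 : ℝ) - l)) (-1 + (j + 1) * (2 : ℝ) ^ ((1 : ℝ) - l))

open Set

section PartialCoupling

variable {α β : Type*} [MeasurableSpace α] [MeasurableSpace β]

structure IsPartialCoupling (π : Measure (α × β)) (μ : Measure α) (ν : Measure β) : Prop where
  fst_le : π.fst ≤ μ
  snd_le : π.snd ≤ ν

/-- The product measure rescaled to total mass `min (μ univ) (ν univ)`. -/
noncomputable def matchedProd (μ : Measure α) (ν : Measure β) : Measure (α × β) :=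
  (min (μ univ) (ν univ) / (μ univ * ν univ)) • μ.prod ν

noncomputable def completeCoupling (π : Measure (α × β)) (μ : Measure α) (ν : Measure β) :
    Measure (α × β) :=
  π + matchedProd (μ - π.fst) (ν - π.snd)

variable {π π₁ π₂ : Measure (α × β)} {μ μ₁ μ₂ μ' : Measure α} {ν ν₁ ν₂ ν' : Measure β}

lemma ENNReal.min_div_mul_mul_le (a : ℝ≥0∞) {b : ℝ≥0∞} (hb : b ≠ ∞) :
    min a b / (a * b) * b ≤ 1 := by
  rcases eq_or_ne b 0 with rfl | hb₀
  · simp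
  rw [← ENNReal.mul_div_right_comm, ENNReal.mul_div_mul_right _ _ hb₀ hb]
  exact ENNReal.div_le_of_le_mul (by simp)

section Finite

variable [IsFiniteMeasure μ] [IsFiniteMeasure ν]

lemma matchedProd_univ : matchedProd μ ν univ = min (μ univ) (ν univ) := by
  rw [matchedProd, Measure.smul_apply, smul_eq_mul, ← univ_prod_univ, Measure.prod_prod]
  rcases eq_or_ne (μ univ * ν univ) 0 with h | h
  · rcases mul_eq_zero.1 h with h | h <;> simp [h]
  · exact ENNReal.div_mul_cancel h (by finiteness)

lemma isPartialCoupling_matchedProd : IsPartialCoupling (matchedProd μ ν) μ ν where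
  fst_le s := by
    rw [matchedProd, Measure.fst, Measure.map_smul, Measure.map_fst_prod, smul_smul,
      Measure.smul_apply, smul_eq_mul]
    exact mul_le_of_le_one_left' (ENNReal.min_div_mul_mul_le _ (by finiteness))
  snd_le s := by
    rw [matchedProd, Measure.snd, Measure.map_smul, Measure.map_snd_prod, smul_smul,
      Measure.smul_apply, smul_eq_mul, min_comm, mul_comm (μ univ)]
    exact mul_le_of_le_one_left' (ENNReal.min_div_mul_mul_le _ (by finiteness))

end Finite

namespace IsPartialCoupling

lemma add (h₁ : IsPartialCoupling π₁ μ₁ ν₁) (h₂ : IsPartialCoupling π₂ μ₂ ν₂) :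
    IsPartialCoupling (π₁ + π₂) (μ₁ + μ₂) (ν₁ + ν₂) where
  fst_le := by rw [Measure.fst_add]; exact add_le_add h₁.fst_le h₂.fst_le
  snd_le := by rw [Measure.snd_add]; exact add_le_add h₁.snd_le h₂.snd_le

lemma mono (h : IsPartialCoupling π μ ν) (hμ : μ ≤ μ') (hν : ν ≤ ν') :
    IsPartialCoupling π μ' ν' :=
  ⟨h.fst_le.trans hμ, h.snd_le.trans hν⟩

lemma univ_le_left (h : IsPartialCoupling π μ ν) : π univ ≤ μ univ :=
  Measure.fst_univ (ρ := π) ▸ h.fst_le univ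

lemma univ_le_right (h : IsPartialCoupling π μ ν) : π univ ≤ ν univ :=
  Measure.snd_univ (ρ := π) ▸ h.snd_le univ

lemma fst_eq [IsFiniteMeasure μ] (h : IsPartialCoupling π μ ν) (hπ : π univ = μ univ) :
    π.fst = μ :=
  have := isFiniteMeasure_of_le μ h.fst_le
  Measure.eq_of_le_of_measure_univ_eq h.fst_le (by rw [Measure.fst_univ, hπ])

lemma snd_eq [IsFiniteMeasure ν] (h : IsPartialCoupling π μ ν) (hπ : π univ = ν univ) :
    π.snd = ν :=
  have := isFiniteMeasure_of_le ν h.snd_le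
  Measure.eq_of_le_of_measure_univ_eq h.snd_le (by rw [Measure.snd_univ, hπ])

variable [IsFiniteMeasure μ] [IsFiniteMeasure ν]

lemma complete (h : IsPartialCoupling π μ ν) :
    IsPartialCoupling (completeCoupling π μ ν) μ ν := by
  have := isFiniteMeasure_of_le μ h.fst_le
  have := isFiniteMeasure_of_le ν h.snd_le
  have hres := isPartialCoupling_matchedProd (μ := μ - π.fst) (ν := ν - π.snd)
  constructor
  · calc (completeCoupling π μ ν).fst ≤ π.fst + (μ - π.fst) := by
          rw [completeCoupling, Measure.fst_add]; exact add_le_add_right hres.fst_le _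
      _ = μ := by rw [add_comm, Measure.sub_add_cancel_of_le h.fst_le]
  · calc (completeCoupling π μ ν).snd ≤ π.snd + (ν - π.snd) := by
          rw [completeCoupling, Measure.snd_add]; exact add_le_add_right hres.snd_le _
      _ = ν := by rw [add_comm, Measure.sub_add_cancel_of_le h.snd_le]

lemma min_residual_univ (h : IsPartialCoupling π μ ν) :
    min ((μ - π.fst) univ) ((ν - π.snd) univ) = min (μ univ) (ν univ) - π univ := by
  have := isFiniteMeasure_of_le μ h.fst_le
  have := isFiniteMeasure_of_le ν h.snd_le
  rw [Measure.sub_apply MeasurableSet.univ h.fst_le, Measure.sub_apply MeasurableSet.univ h.snd_le,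
    Measure.fst_univ, Measure.snd_univ]
  exact (Monotone.map_min fun _ _ hab => tsub_le_tsub_right hab _).symm

lemma completeCoupling_univ (h : IsPartialCoupling π μ ν) :
    completeCoupling π μ ν univ = min (μ univ) (ν univ) := by
  rw [_root_.completeCoupling, Measure.add_apply, matchedProd_univ, h.min_residual_univ,
    add_tsub_cancel_of_le (le_min h.univ_le_left h.univ_le_right)]

end IsPartialCoupling

end PartialCoupling

noncomputable def transportCost (p : ℝ) (π : Measure (ℝ × ℝ)) : ℝ≥0∞ :=
  ∫⁻ z, ENNReal.ofReal (|z.1 - z.2| ^ p) ∂π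

section TransportCost

variable {p : ℝ} {π π₁ π₂ : Measure (ℝ × ℝ)} {μ ν : Measure ℝ}

lemma WpPow_le_transportCost {P Q : Measure ℝ} (hP : π.fst = P) (hQ : π.snd = Q) :
    WpPow p P Q ≤ transportCost p π :=
  iInf_le_of_le π <| iInf_le_of_le hP <| iInf_le _ hQ

lemma transportCost_add :
    transportCost p (π₁ + π₂) = transportCost p π₁ + transportCost p π₂ :=
  lintegral_add_measure _ _ _

lemma transportCost_le_of_ae_abs_sub_le (hp : 0 ≤ p) {r : ℝ} (h : ∀ᵐ z ∂π, |z.1 - z.2| ≤ r) :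
    transportCost p π ≤ ENNReal.ofReal (r ^ p) * π univ := by
  rw [← lintegral_const]
  exact lintegral_mono_ae <| h.mono fun z hz =>
    ENNReal.ofReal_le_ofReal (Real.rpow_le_rpow (abs_nonneg _) hz hp)

lemma transportCost_matchedProd_le [IsFiniteMeasure μ] [IsFiniteMeasure ν] (hp : 0 ≤ p)
    {c len : ℝ} (hμ : ∀ᵐ x ∂μ, x ∈ Ioc c (c + len)) (hν : ∀ᵐ y ∂ν, y ∈ Ioc c (c + len)) :
    transportCost p (matchedProd μ ν) ≤ ENNReal.ofReal (len ^ p) * min (μ univ) (ν univ) := by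
  rw [← matchedProd_univ]
  refine transportCost_le_of_ae_abs_sub_le hp (Measure.ae_smul_measure ?_ _)
  filter_upwards [Measure.quasiMeasurePreserving_fst.ae hμ,
    Measure.quasiMeasurePreserving_snd.ae hν] with z hz₁ hz₂
  rw [abs_sub_le_iff]
  constructor <;> linarith [hz₁.1, hz₁.2, hz₂.1, hz₂.2]

lemma IsPartialCoupling.transportCost_completeCoupling_le [IsFiniteMeasure μ] [IsFiniteMeasure ν]
    (h : IsPartialCoupling π μ ν) (hp : 0 ≤ p) {c len : ℝ}
    (hμ : ∀ᵐ x ∂μ, x ∈ Ioc c (c + len)) (hν : ∀ᵐ y ∂ν, y ∈ Ioc c (c + len)) :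
    transportCost p (completeCoupling π μ ν)
      ≤ transportCost p π + ENNReal.ofReal (len ^ p) * (min (μ univ) (ν univ) - π univ) := by
  rw [completeCoupling, transportCost_add, ← h.min_residual_univ]
  gcongr
  exact transportCost_matchedProd_le hp
    ((Measure.absolutelyContinuous_of_le Measure.sub_le).ae_le hμ)
    ((Measure.absolutelyContinuous_of_le Measure.sub_le).ae_le hν)

end TransportCost

def tile (c len : ℝ) (l j : ℕ) : Set ℝ :=
  Ioc (c + j * (len / 2 ^ l)) (c + (j + 1) * (len / 2 ^ l))

lemma tile_zero_zero (c len : ℝ) : tile c len 0 0 = Ioc c (c + len) := by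
  simp [tile]

lemma tile_succ (c len : ℝ) (l j : ℕ) : tile c len (l + 1) j = tile c (len / 2) l j := by
  simp only [tile, div_div, ← pow_succ']

lemma tile_succ_two_pow_add (c len : ℝ) (l j : ℕ) :
    tile c len (l + 1) (2 ^ l + j) = tile (c + len / 2) (len / 2) l j := by
  have hend : ∀ x : ℝ,
      c + (2 ^ l + x) * (len / 2 ^ (l + 1)) = c + len / 2 + x * (len / 2 / 2 ^ l) := by
    intro x; field_simp; ring
  simp only [tile, Nat.cast_add, Nat.cast_pow, Nat.cast_ofNat, add_assoc, hend]

lemma tile_neg_one_two (l j : ℕ) : tile (-1) 2 l j = dyadicCell l j := by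
  rw [tile, dyadicCell, Real.rpow_sub two_pos, Real.rpow_one, Real.rpow_natCast]

lemma Ioc_union_Ioc_half (c : ℝ) {len : ℝ} (hlen : 0 ≤ len) :
    Ioc c (c + len / 2) ∪ Ioc (c + len / 2) (c + len / 2 + len / 2) = Ioc c (c + len) := by
  rw [Ioc_union_Ioc_eq_Ioc (by linarith) (by linarith), add_assoc, add_halves]

/-- In `ℝ≥0∞`, `a - b + (b - a)` plays the role of `|a - b|`. -/
noncomputable def tileDiscrepancy (μ ν : Measure ℝ) (c len : ℝ) (l : ℕ) : ℝ≥0∞ :=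
  ∑ j ∈ Finset.range (2 ^ l),
    (μ (tile c len l j) - ν (tile c len l j) + (ν (tile c len l j) - μ (tile c len l j)))

lemma ENNReal.ofReal_abs_toReal_sub {a b : ℝ≥0∞} (ha : a ≠ ∞) (hb : b ≠ ∞) :
    ENNReal.ofReal |a.toReal - b.toReal| = a - b + (b - a) := by
  rcases le_total a b with h | h
  · rw [abs_sub_comm, abs_of_nonneg (sub_nonneg.2 (toReal_mono hb h)), ← toReal_sub_of_le h hb,
      ofReal_toReal (by finiteness), tsub_eq_zero_of_le h, zero_add]
  · rw [abs_of_nonneg (sub_nonneg.2 (toReal_mono ha h)), ← toReal_sub_of_le h ha,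
      ofReal_toReal (by finiteness), tsub_eq_zero_of_le h, add_zero]

section TileDiscrepancy

variable (μ ν : Measure ℝ) (c len : ℝ)

lemma tileDiscrepancy_zero :
    tileDiscrepancy μ ν c len 0 =
      μ (Ioc c (c + len)) - ν (Ioc c (c + len)) + (ν (Ioc c (c + len)) - μ (Ioc c (c + len))) := by
  simp [tileDiscrepancy, tile_zero_zero]

lemma tileDiscrepancy_succ (l : ℕ) :
    tileDiscrepancy μ ν c len (l + 1)
      = tileDiscrepancy μ ν c (len / 2) l + tileDiscrepancy μ ν (c + len / 2) (len / 2) l := by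
  rw [tileDiscrepancy, pow_succ, mul_two, Finset.sum_range_add]
  simp only [tile_succ_two_pow_add]
  simp only [tile_succ, tileDiscrepancy]

lemma tileDiscrepancy_eq_ofReal [IsFiniteMeasure μ] [IsFiniteMeasure ν] (l : ℕ) :
    tileDiscrepancy μ ν c len l = ENNReal.ofReal (∑ j ∈ Finset.range (2 ^ l),
      |(μ (tile c len l j)).toReal - (ν (tile c len l j)).toReal|) := by
  rw [ENNReal.ofReal_sum_of_nonneg fun _ _ => abs_nonneg _]
  exact Finset.sum_congr rfl fun j _ =>
    (ENNReal.ofReal_abs_toReal_sub (by finiteness) (by finiteness)).symm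

lemma tileDiscrepancy_neg_one_two [IsFiniteMeasure μ] [IsFiniteMeasure ν] (l : ℕ) :
    tileDiscrepancy μ ν (-1) 2 l = ENNReal.ofReal (∑ j ∈ Finset.range (2 ^ l),
      |(μ (dyadicCell l j)).toReal - (ν (dyadicCell l j)).toReal|) := by
  simp only [tileDiscrepancy_eq_ofReal, tile_neg_one_two]

end TileDiscrepancy

lemma ENNReal.min_add_add_le (a b a' b' : ℝ≥0∞) :
    min (a + b) (a' + b') ≤ min a a' + min b b' + (a - a' + (a' - a) + (b - b' + (b' - b))) :=
  calc min (a + b) (a' + b') ≤ a - a' + min a a' + (b - b' + min b b') := by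
        rw [tsub_add_min, tsub_add_min]; exact min_le_left _ _
    _ ≤ a - a' + min a a' + (b - b' + min b b') + ((a' - a) + (b' - b)) := le_self_add
    _ = _ := by ring

lemma min_measure_Ioc_le_add_tileDiscrepancy_one (μ ν : Measure ℝ) (c : ℝ) {len : ℝ}
    (hlen : 0 ≤ len) :
    min (μ (Ioc c (c + len))) (ν (Ioc c (c + len)))
      ≤ min (μ (Ioc c (c + len / 2))) (ν (Ioc c (c + len / 2)))
        + min (μ (Ioc (c + len / 2) (c + len / 2 + len / 2)))
          (ν (Ioc (c + len / 2) (c + len / 2 + len / 2)))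
        + tileDiscrepancy μ ν c len 1 := by
  rw [← Ioc_union_Ioc_half c hlen, tileDiscrepancy_succ, tileDiscrepancy_zero, tileDiscrepancy_zero,
    measure_union (Ioc_disjoint_Ioc_of_le le_rfl) measurableSet_Ioc,
    measure_union (Ioc_disjoint_Ioc_of_le le_rfl) measurableSet_Ioc]
  exact ENNReal.min_add_add_le _ _ _ _

lemma div_two_pow_rpow {x p : ℝ} (hx : 0 ≤ x) (m : ℕ) :
    (x / 2 ^ m) ^ p = x ^ p * 2 ^ (-(m : ℝ) * p) := by
  rw [Real.div_rpow hx (by positivity), ← Real.rpow_natCast, ← Real.rpow_mul zero_le_two,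
    neg_mul, Real.rpow_neg zero_le_two, div_eq_mul_inv]

lemma sum_two_div_two_pow_rpow_mul_le {p : ℝ} (hp : 0 ≤ p) (a : ℕ → ℝ) (L : ℕ) :
    ∑ l ∈ Finset.range L, ((2 : ℝ) / 2 ^ l) ^ p * a (l + 1) + (2 / 2 ^ L) ^ p
      ≤ 4 ^ p * (∑ l ∈ Finset.Icc 1 L, (2 : ℝ) ^ (-(l : ℝ) * p) * a l + 2 ^ (-(L : ℝ) * p)) := by
  have hsum : ∑ l ∈ Finset.range L, ((2 : ℝ) / 2 ^ l) ^ p * a (l + 1)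
      = 4 ^ p * ∑ l ∈ Finset.Icc 1 L, (2 : ℝ) ^ (-(l : ℝ) * p) * a l := by
    rw [Finset.mul_sum, ← Finset.Ico_add_one_right_eq_Icc, Finset.sum_Ico_eq_sum_range,
      Nat.add_sub_cancel]
    refine Finset.sum_congr rfl fun l _ => ?_
    rw [show (2 : ℝ) / 2 ^ l = 4 / 2 ^ (l + 1) by rw [pow_succ]; field_simp; norm_num,
      div_two_pow_rpow (by norm_num), add_comm 1 l, mul_assoc]
  have hlast : ((2 : ℝ) / 2 ^ L) ^ p ≤ 4 ^ p * 2 ^ (-(L : ℝ) * p) := by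
    rw [div_two_pow_rpow zero_le_two]
    gcongr
    norm_num
  rw [mul_add, hsum]
  gcongr

noncomputable def dyadicCostBound (p : ℝ) (μ ν : Measure ℝ) (c len : ℝ) (n : ℕ) : ℝ≥0∞ :=
  ∑ l ∈ Finset.range n, ENNReal.ofReal ((len / 2 ^ l) ^ p) * tileDiscrepancy μ ν c len (l + 1)
    + ENNReal.ofReal ((len / 2 ^ n) ^ p) * μ (Ioc c (c + len))

lemma dyadicCostBound_zero (p : ℝ) (μ ν : Measure ℝ) (c len : ℝ) :
    dyadicCostBound p μ ν c len 0 = ENNReal.ofReal (len ^ p) * μ (Ioc c (c + len)) := by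
  simp [dyadicCostBound]

lemma dyadicCostBound_succ (p : ℝ) (μ ν : Measure ℝ) (c : ℝ) {len : ℝ} (hlen : 0 ≤ len)
    (n : ℕ) :
    dyadicCostBound p μ ν c len (n + 1) = dyadicCostBound p μ ν c (len / 2) n
      + dyadicCostBound p μ ν (c + len / 2) (len / 2) n
      + ENNReal.ofReal (len ^ p) * tileDiscrepancy μ ν c len 1 := by
  rw [dyadicCostBound, dyadicCostBound, dyadicCostBound, Finset.sum_range_succ',
    ← Ioc_union_Ioc_half c hlen, measure_union (Ioc_disjoint_Ioc_of_le le_rfl) measurableSet_Ioc]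
  simp only [tileDiscrepancy_succ μ ν c len, div_div, ← pow_succ', pow_zero, div_one,
    Finset.sum_add_distrib, mul_add]
  ring

theorem exists_partialCoupling_restrict_Ioc {p : ℝ} (hp : 0 ≤ p) (μ ν : Measure ℝ)
    [IsFiniteMeasure μ] [IsFiniteMeasure ν] (n : ℕ) (c : ℝ) {len : ℝ} (hlen : 0 ≤ len) :
    ∃ π, IsPartialCoupling π (μ.restrict (Ioc c (c + len))) (ν.restrict (Ioc c (c + len))) ∧
      π univ = min (μ (Ioc c (c + len))) (ν (Ioc c (c + len))) ∧
      transportCost p π ≤ dyadicCostBound p μ ν c len n := by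
  induction n generalizing c len with
  | zero =>
    refine ⟨matchedProd _ _, isPartialCoupling_matchedProd, by
      rw [matchedProd_univ, Measure.restrict_apply_univ, Measure.restrict_apply_univ], ?_⟩
    calc _ ≤ ENNReal.ofReal (len ^ p) * min (μ (Ioc c (c + len))) (ν (Ioc c (c + len))) := by
          simpa only [Measure.restrict_apply_univ] using transportCost_matchedProd_le hp
            (ae_restrict_mem measurableSet_Ioc) (ae_restrict_mem measurableSet_Ioc)
      _ ≤ _ := by rw [dyadicCostBound_zero]; gcongr; exact min_le_left _ _
  | succ n ih =>
    obtain ⟨πA, hA, hA_univ, hA_cost⟩ := ih c (len := len / 2) (by linarith)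
    obtain ⟨πB, hB, hB_univ, hB_cost⟩ := ih (c + len / 2) (len := len / 2) (by linarith)
    set I := Ioc c (c + len) with hI
    have hσ : IsPartialCoupling (πA + πB) (μ.restrict I) (ν.restrict I) := by
      have hdisj : Disjoint (Ioc c (c + len / 2)) (Ioc (c + len / 2) (c + len / 2 + len / 2)) :=
        Ioc_disjoint_Ioc_of_le le_rfl
      rw [hI, ← Ioc_union_Ioc_half c hlen, Measure.restrict_union hdisj measurableSet_Ioc,
        Measure.restrict_union hdisj measurableSet_Ioc]
      exact hA.add hB
    have hgap : min (μ I) (ν I) - (πA + πB) univ ≤ tileDiscrepancy μ ν c len 1 := by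
      rw [Measure.add_apply, hA_univ, hB_univ, tsub_le_iff_left]
      exact min_measure_Ioc_le_add_tileDiscrepancy_one μ ν c hlen
    refine ⟨completeCoupling (πA + πB) (μ.restrict I) (ν.restrict I), hσ.complete, by
      rw [hσ.completeCoupling_univ, Measure.restrict_apply_univ, Measure.restrict_apply_univ], ?_⟩
    calc _ ≤ transportCost p πA + transportCost p πB
          + ENNReal.ofReal (len ^ p) * (min (μ I) (ν I) - (πA + πB) univ) := by
          simpa only [Measure.restrict_apply_univ, transportCost_add] using
            hσ.transportCost_completeCoupling_le hp (ae_restrict_mem measurableSet_Ioc)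
              (ae_restrict_mem measurableSet_Ioc)
      _ ≤ _ := add_le_add (add_le_add hA_cost hB_cost) (mul_le_mul' le_rfl hgap)
      _ = _ := (dyadicCostBound_succ p μ ν c hlen n).symm

/-- If `P, Q` are probability measures supported on `(-1,1]`, then for every
`L ≥ 1` and `p ≥ 1`,
`W_p^p(P,Q) ≤ κ_p (∑_{l=1}^L 2^{-lp} ∑_{F ∈ 𝒫_l} |P(F)-Q(F)| + 2^{-Lp})`
for a constant `κ_p` depending only on `p`. -/
theorem WpPow_le_dyadic_partition_bound (p : ℝ) (hp : 1 ≤ p) :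
    ∃ κ : ℝ, 0 < κ ∧
      ∀ (P Q : Measure ℝ), IsProbabilityMeasure P → IsProbabilityMeasure Q →
        P (Set.Ioc (-1 : ℝ) 1) = 1 → Q (Set.Ioc (-1 : ℝ) 1) = 1 →
        ∀ L : ℕ, 1 ≤ L →
          WpPow p P Q ≤ ENNReal.ofReal (κ *
            ((∑ l ∈ Finset.Icc 1 L, (2 : ℝ) ^ (-(l : ℝ) * p) *
                ∑ j ∈ Finset.range (2 ^ l),
                  |(P (dyadicCell l j)).toReal - (Q (dyadicCell l j)).toReal|)
              + (2 : ℝ) ^ (-(L : ℝ) * p))) := by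
  refine ⟨4 ^ p, by positivity, fun P Q _ _ hP hQ L _ => ?_⟩
  have hp₀ : 0 ≤ p := by linarith
  have hI : Ioc (-1 : ℝ) (-1 + 2) = Ioc (-1) 1 := by norm_num
  obtain ⟨π, hπ, hπ_univ, hπ_cost⟩ :=
    exists_partialCoupling_restrict_Ioc hp₀ P Q L (-1) zero_le_two
  rw [hI] at hπ hπ_univ
  rw [hP, hQ, min_self] at hπ_univ
  have hcoupling := hπ.mono Measure.restrict_le_self Measure.restrict_le_self
  calc WpPow p P Q ≤ transportCost p π :=
        WpPow_le_transportCost (hcoupling.fst_eq (by rw [hπ_univ, measure_univ]))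
          (hcoupling.snd_eq (by rw [hπ_univ, measure_univ]))
    _ ≤ _ := hπ_cost
    _ ≤ ENNReal.ofReal (∑ l ∈ Finset.range L, ((2 : ℝ) / 2 ^ l) ^ p *
          ∑ j ∈ Finset.range (2 ^ (l + 1)),
            |(P (dyadicCell (l + 1) j)).toReal - (Q (dyadicCell (l + 1) j)).toReal|
          + (2 / 2 ^ L) ^ p) := by
      rw [dyadicCostBound, hI, ENNReal.ofReal_add (by positivity) (by positivity),
        ENNReal.ofReal_sum_of_nonneg fun _ _ => by positivity, hP, mul_one]
      gcongr with l
      rw [ENNReal.ofReal_mul (by positivity), tileDiscrepancy_neg_one_two]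
    _ ≤ _ := ENNReal.ofReal_le_ofReal (sum_two_div_two_pow_rpow_mul_le hp₀
      (fun m => ∑ j ∈ Finset.range (2 ^ m),
        |(P (dyadicCell m j)).toReal - (Q (dyadicCell m j)).toReal|) L)
end

section
/- Let P_0 be a probability measure on [0,1] with density p_0 satisfying inf_{x∈[0,1]} p_0(x) ≥ c_0 > 0. Fix ε > 0, let N = ⌈1/ε⌉ and partition [0,1] into intervals I_j of length ε (the last possibly longer), and let I_{jk} = ∪_{l=j}^{j+k−1} I_l. If a probability measure P on [0,1] satisfies P(I_{jk}) − P_0(I_{jk}) ≤ c_0 ε / 2 for all j, k, then W_∞(P, P_0) ≤ 2ε. -/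
open MeasureTheory ENNReal

/-- The `j`-th interval of the `ε`-grid on `[0,1]` with `N` cells:
`I_j = [(j-1)ε, jε)` for `j < N`, and `I_N = [(N-1)ε, 1]`. -/
noncomputable def gridInterval (ε : ℝ) (N : ℕ) (j : ℕ) : Set ℝ :=
  if j = N then Set.Icc ((N - 1 : ℝ) * ε) 1
  else Set.Ico ((j - 1 : ℝ) * ε) ((j : ℝ) * ε)

/-- `I_{jk} = ∪_{l=j}^{j+k-1} I_l`. -/
noncomputable def gridUnion (ε : ℝ) (N : ℕ) (j k : ℕ) : Set ℝ :=
  ⋃ l ∈ Finset.Icc j (j + k - 1), gridInterval ε N l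

/-!
Let `C` be the union of the grid cells meeting `A`. Then `P A ≤ P C`, and `C^ε ⊆ A^{2ε}` because
cells have length at most `ε`. Split the cells of `C` into maximal runs of consecutive cells. A run
`K` has `P K ≤ P₀ K + c₀ε/2`, and inside `[0,1] ∩ K^{ε/2} \ K` lies an interval of length `ε/2`
(left of the run, or right of it when the run starts at the first cell), which carries `P₀`-mass at
least `c₀ε/2`. Distinct runs are at least `ε` apart, so their `ε/2`-enlargements are disjoint and
summing gives `P C ≤ P₀ (C^{ε/2})`. The one exception is a run covering the first `N - 1` cells: then
`C^ε ⊇ [0,1)`, which has full `P₀`-measure although `1` itself may be at distance exactly `ε`.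
-/

open Set Metric

theorem Finset.exists_Icc_subset_add_one_notMem {S : Finset ℕ} {j : ℕ} (hj : j ∈ S) :
    ∃ e, j ≤ e ∧ Finset.Icc j e ⊆ S ∧ e + 1 ∉ S := by
  classical
  have hex : ∃ n, j + n + 1 ∉ S := ⟨S.sup id, fun h => by
    have := Finset.le_sup (f := id) h
    simp only [id] at this
    omega⟩
  refine ⟨j + Nat.find hex, by omega, fun i hi => ?_, Nat.find_spec hex⟩
  obtain ⟨hji, hin⟩ := Finset.mem_Icc.1 hi
  obtain rfl | hlt := hji.eq_or_lt
  · exact hj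
  · obtain ⟨k, rfl⟩ := Nat.exists_eq_add_of_lt hlt
    exact not_not.1 (Nat.find_min hex (by omega : k < Nat.find hex))

theorem Metric.ball_subset_thickening_of_mem_closure {X : Type*} [PseudoMetricSpace X]
    {x : X} {E : Set X} (hx : x ∈ closure E) (δ : ℝ) : ball x δ ⊆ thickening δ E :=
  thickening_closure (s := E) ▸ ball_subset_thickening hx δ

theorem Metric.disjoint_thickening_of_le_dist {X : Type*} [PseudoMetricSpace X]
    {s t : Set X} {δ : ℝ} (h : ∀ x ∈ s, ∀ y ∈ t, 2 * δ ≤ dist x y) :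
    Disjoint (thickening δ s) (thickening δ t) := by
  refine Set.disjoint_left.2 fun z hzs hzt => ?_
  obtain ⟨x, hx, hzx⟩ := mem_thickening_iff.1 hzs
  obtain ⟨y, hy, hzy⟩ := mem_thickening_iff.1 hzt
  linarith [h x hx y hy, dist_triangle_left x y z]

theorem ENNReal.le_add_ofReal_of_toReal_sub_le {a b : ℝ≥0∞} {δ : ℝ} (ha : a ≠ ∞)
    (h : a.toReal - b.toReal ≤ δ) : a ≤ b + ENNReal.ofReal δ :=
  calc a = ENNReal.ofReal a.toReal := (ofReal_toReal ha).symm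
    _ ≤ ENNReal.ofReal (b.toReal + δ) := ofReal_le_ofReal (by linarith)
    _ ≤ ENNReal.ofReal b.toReal + ENNReal.ofReal δ := ofReal_add_le
    _ ≤ b + ENNReal.ofReal δ := by gcongr; exact ofReal_toReal_le

theorem MeasureTheory.Measure.const_mul_le_withDensity_apply {α : Type*} [MeasurableSpace α]
    (μ : Measure α) {f : α → ℝ≥0∞} {s : Set α} (hs : MeasurableSet s) {c : ℝ≥0∞}
    (hc : ∀ x ∈ s, c ≤ f x) : c * μ s ≤ μ.withDensity f s := by
  rw [withDensity_apply _ hs, ← setLIntegral_const]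
  exact setLIntegral_mono' hs hc

theorem one_le_natCeil_one_div_mul {ε : ℝ} (hε : 0 < ε) : 1 ≤ (⌈1 / ε⌉₊ : ℝ) * ε := by
  have := Nat.le_ceil (1 / ε)
  rwa [div_le_iff₀ hε] at this

theorem natCeil_one_div_sub_one_mul_lt_one {ε : ℝ} (hε : 0 < ε) :
    ((⌈1 / ε⌉₊ : ℝ) - 1) * ε < 1 := by
  have := Nat.ceil_lt_add_one (one_div_pos.2 hε).le
  rwa [← sub_lt_iff_lt_add, lt_div_iff₀ hε] at this

section Grid

variable {ε : ℝ} {N : ℕ}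

theorem gridInterval_subset_Icc (hNε : 1 ≤ N * ε) (l : ℕ) :
    gridInterval ε N l ⊆ Icc (((l : ℝ) - 1) * ε) (l * ε) := by
  unfold gridInterval
  split_ifs with h
  · subst h; exact Icc_subset_Icc le_rfl hNε
  · exact Ico_subset_Icc_self

theorem measurableSet_gridInterval (l : ℕ) : MeasurableSet (gridInterval ε N l) := by
  unfold gridInterval
  split_ifs
  exacts [measurableSet_Icc, measurableSet_Ico]

theorem sub_one_mul_mem_gridInterval (hε : 0 < ε) (hN1 : ((N : ℝ) - 1) * ε < 1) (l : ℕ) :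
    ((l : ℝ) - 1) * ε ∈ gridInterval ε N l := by
  unfold gridInterval
  split_ifs with h
  · subst h; exact ⟨le_rfl, hN1.le⟩
  · exact ⟨le_rfl, by linarith⟩

theorem mul_mem_closure_gridInterval (hε : 0 < ε) {l : ℕ} (hl : l ≠ N) :
    (l : ℝ) * ε ∈ closure (gridInterval ε N l) := by
  rw [gridInterval, if_neg hl, closure_Ico (by nlinarith)]
  exact ⟨by linarith, le_rfl⟩

theorem exists_mem_gridInterval (hε : 0 < ε) (hNε : 1 ≤ N * ε) {x : ℝ} (hx : x ∈ Icc 0 1) :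
    ∃ l ∈ Finset.Icc 1 N, x ∈ gridInterval ε N l := by
  have hN : N ≠ 0 := by rintro rfl; norm_num at hNε
  by_cases hxN : ((N : ℝ) - 1) * ε ≤ x
  · exact ⟨N, Finset.mem_Icc.2 ⟨by omega, le_rfl⟩, by rw [gridInterval, if_pos rfl]; exact ⟨hxN, hx.2⟩⟩
  set k := ⌊x / ε⌋₊
  have hk : (k : ℝ) * ε ≤ x := (le_div_iff₀ hε).1 (Nat.floor_le (div_nonneg hx.1 hε.le))
  have hk' : x < (k + 1) * ε := (div_lt_iff₀ hε).1 (Nat.lt_floor_add_one _)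
  have hkN : k + 1 < N := by
    have : (k : ℝ) < N - 1 := by nlinarith
    exact_mod_cast (by linarith : (k : ℝ) + 1 < N)
  refine ⟨k + 1, Finset.mem_Icc.2 ⟨by omega, hkN.le⟩, ?_⟩
  rw [gridInterval, if_neg hkN.ne]
  push_cast
  exact ⟨by linarith, hk'⟩

def gridSet (ε : ℝ) (N : ℕ) (S : Finset ℕ) : Set ℝ := ⋃ l ∈ S, gridInterval ε N l

theorem gridSet_Icc_eq_gridUnion {j e : ℕ} (h : j ≤ e) :
    gridSet ε N (Finset.Icc j e) = gridUnion ε N j (e - j + 1) := by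
  rw [gridUnion, show j + (e - j + 1) - 1 = e by omega, gridSet]

theorem gridSet_union (S T : Finset ℕ) :
    gridSet ε N (S ∪ T) = gridSet ε N S ∪ gridSet ε N T :=
  Finset.set_biUnion_union S T _

theorem gridInterval_subset_gridSet {S : Finset ℕ} {l : ℕ} (hl : l ∈ S) :
    gridInterval ε N l ⊆ gridSet ε N S :=
  subset_biUnion_of_mem (u := fun l => gridInterval ε N l) (Finset.mem_coe.2 hl)

theorem measurableSet_gridSet (S : Finset ℕ) : MeasurableSet (gridSet ε N S) :=
  Finset.measurableSet_biUnion S fun l _ => measurableSet_gridInterval l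

theorem gridSet_subset_Icc (hε : 0 < ε) (hNε : 1 ≤ N * ε) {S : Finset ℕ} {j e : ℕ}
    (hS : S ⊆ Finset.Icc j e) : gridSet ε N S ⊆ Icc (((j : ℝ) - 1) * ε) (e * ε) := by
  refine iUnion₂_subset fun l hl => (gridInterval_subset_Icc hNε l).trans (Icc_subset_Icc ?_ ?_)
  all_goals
    obtain ⟨hjl, hle⟩ := Finset.mem_Icc.1 (hS hl)
    gcongr

theorem exists_Ioo_subset_thickening_gridSet_Icc_sdiff (hε : 0 < ε) (hNε : 1 ≤ N * ε)
    (hN1 : ((N : ℝ) - 1) * ε < 1) {j e : ℕ} (hje : j ≤ e) (heN : e ≤ N)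
    (hend : 1 < j ∨ e + 1 < N) :
    ∃ a, Ioo a (a + ε / 2) ⊆ Icc 0 1 ∧
      Ioo a (a + ε / 2) ⊆ thickening (ε / 2) (gridSet ε N (Finset.Icc j e)) \
        gridSet ε N (Finset.Icc j e) := by
  have hK := gridSet_subset_Icc hε hNε (N := N) (subset_refl (Finset.Icc j e))
  have hjR : (j : ℝ) ≤ e := by exact_mod_cast hje
  have heR : (e : ℝ) ≤ N := by exact_mod_cast heN
  rcases hend with hj2 | heN'
  · have hj2R : (2 : ℝ) ≤ j := by exact_mod_cast hj2
    refine ⟨((j : ℝ) - 1) * ε - ε / 2, fun x hx => ⟨by nlinarith [hx.1], by nlinarith [hx.2]⟩,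
      fun x hx => ⟨?_, fun hxK => by linarith [hx.2, (hK hxK).1]⟩⟩
    refine ball_subset_thickening
      (gridInterval_subset_gridSet (Finset.mem_Icc.2 ⟨le_rfl, hje⟩)
        (sub_one_mul_mem_gridInterval hε hN1 j)) _ ?_
    rw [Real.ball_eq_Ioo]
    exact ⟨hx.1, by linarith [hx.2]⟩
  · have heR' : (e : ℝ) + 2 ≤ N := by exact_mod_cast heN'
    refine ⟨e * ε, fun x hx => ⟨by nlinarith [hx.1], by nlinarith [hx.2]⟩,
      fun x hx => ⟨?_, fun hxK => by linarith [hx.1, (hK hxK).2]⟩⟩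
    refine ball_subset_thickening_of_mem_closure
      (closure_mono (gridInterval_subset_gridSet (Finset.mem_Icc.2 ⟨hje, le_rfl⟩))
        (mul_mem_closure_gridInterval hε (by omega))) _ ?_
    rw [Real.ball_eq_Ioo]
    exact ⟨by linarith [hx.1], hx.2⟩

variable {P P₀ : Measure ℝ} {m : ℝ≥0∞}

theorem measure_gridSet_Icc_le_thickening (hε : 0 < ε) (hNε : 1 ≤ N * ε)
    (hN1 : ((N : ℝ) - 1) * ε < 1)
    (hclose : ∀ j e, 1 ≤ j → j ≤ e → e ≤ N →
      P (gridSet ε N (Finset.Icc j e)) ≤ P₀ (gridSet ε N (Finset.Icc j e)) + m)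
    (hmass : ∀ a, Ioo a (a + ε / 2) ⊆ Icc 0 1 → m ≤ P₀ (Ioo a (a + ε / 2)))
    {j e : ℕ} (hj : 1 ≤ j) (hje : j ≤ e) (heN : e ≤ N) (hend : 1 < j ∨ e + 1 < N) :
    P (gridSet ε N (Finset.Icc j e)) ≤ P₀ (thickening (ε / 2) (gridSet ε N (Finset.Icc j e))) := by
  set K := gridSet ε N (Finset.Icc j e)
  obtain ⟨a, ha01, haK⟩ :=
    exists_Ioo_subset_thickening_gridSet_Icc_sdiff hε hNε hN1 hje heN hend
  calc P K ≤ P₀ K + m := hclose j e hj hje heN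
    _ ≤ P₀ K + P₀ (thickening (ε / 2) K \ K) := by grw [hmass a ha01, haK]
    _ = P₀ (thickening (ε / 2) K) := by
      rw [measure_add_sdiff (measurableSet_gridSet _).nullMeasurableSet,
        union_eq_right.2 (self_subset_thickening (half_pos hε) K)]

theorem measure_gridSet_le_thickening_half (hε : 0 < ε) (hNε : 1 ≤ N * ε)
    (hN1 : ((N : ℝ) - 1) * ε < 1)
    (hclose : ∀ j e, 1 ≤ j → j ≤ e → e ≤ N →
      P (gridSet ε N (Finset.Icc j e)) ≤ P₀ (gridSet ε N (Finset.Icc j e)) + m)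
    (hmass : ∀ a, Ioo a (a + ε / 2) ⊆ Icc 0 1 → m ≤ P₀ (Ioo a (a + ε / 2)))
    (S : Finset ℕ) (hS : S ⊆ Finset.Icc 1 N) (hgap : 1 ∈ S → ∃ l ∈ Finset.Ico 1 N, l ∉ S) :
    P (gridSet ε N S) ≤ P₀ (thickening (ε / 2) (gridSet ε N S)) := by
  induction S using Finset.strongInduction with | H S ih =>
  rcases S.eq_empty_or_nonempty with rfl | hne
  · simp [gridSet]
  set j := S.min' hne
  have hjS : j ∈ S := S.min'_mem hne
  obtain ⟨e, hje, hrun, he⟩ := Finset.exists_Icc_subset_add_one_notMem hjS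
  have hj : 1 ≤ j := (Finset.mem_Icc.1 (hS hjS)).1
  have heN : e ≤ N := (Finset.mem_Icc.1 (hS (hrun (Finset.right_mem_Icc.2 hje)))).2
  set S' := S.filter (e + 1 < ·)
  have hsplit : S = Finset.Icc j e ∪ S' := by
    ext l
    simp only [Finset.mem_union, Finset.mem_Icc, Finset.mem_filter, S']
    have := S.min'_le l
    constructor
    · intro hl
      have hle : l ≠ e + 1 := by rintro rfl; exact he hl
      by_cases hl' : l ≤ e
      exacts [Or.inl ⟨this hl, hl'⟩, Or.inr ⟨hl, by omega⟩]
    · rintro (h | h)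
      exacts [hrun (Finset.mem_Icc.2 h), h.1]
  have hS' : S' ⊆ Finset.Icc (e + 2) N := fun l hl => by
    have := Finset.mem_filter.1 hl
    exact Finset.mem_Icc.2 ⟨this.2, (Finset.mem_Icc.1 (hS this.1)).2⟩
  have hend : 1 < j ∨ e + 1 < N := by
    by_contra! h
    obtain ⟨l, hl, hlS⟩ := hgap (by rwa [show j = 1 by omega] at hjS)
    obtain ⟨h1l, hlN⟩ := Finset.mem_Ico.1 hl
    exact hlS (hrun (Finset.mem_Icc.2 ⟨by omega, by omega⟩))
  have hS'P : P (gridSet ε N S') ≤ P₀ (thickening (ε / 2) (gridSet ε N S')) :=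
    ih S' (Finset.filter_ssubset.2 ⟨j, hjS, by omega⟩)
      (hS'.trans (Finset.Icc_subset_Icc (by omega) le_rfl))
      (fun h => by have := (Finset.mem_Icc.1 (hS' h)).1; omega)
  have hdisj : Disjoint (thickening (ε / 2) (gridSet ε N (Finset.Icc j e)))
      (thickening (ε / 2) (gridSet ε N S')) := by
    refine disjoint_thickening_of_le_dist fun x hx y hy => ?_
    have hx' := (gridSet_subset_Icc hε hNε (subset_refl _) hx).2
    have hy' := (gridSet_subset_Icc hε hNε hS' hy).1
    push_cast at hy'
    rw [Real.dist_eq, abs_sub_comm]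
    exact le_trans (by linarith) (le_abs_self _)
  calc P (gridSet ε N S)
      ≤ P (gridSet ε N (Finset.Icc j e)) + P (gridSet ε N S') := by
        rw [hsplit, gridSet_union]; exact measure_union_le _ _
    _ ≤ P₀ (thickening (ε / 2) (gridSet ε N (Finset.Icc j e))) +
        P₀ (thickening (ε / 2) (gridSet ε N S')) :=
        add_le_add (measure_gridSet_Icc_le_thickening hε hNε hN1 hclose hmass hj hje heN hend) hS'P
    _ = P₀ (thickening (ε / 2) (gridSet ε N S)) := by
      rw [← measure_union hdisj isOpen_thickening.measurableSet, ← thickening_union,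
        ← gridSet_union, ← hsplit]

theorem Ico_subset_thickening_gridSet (hε : 0 < ε) (hNε : 1 ≤ N * ε) {S : Finset ℕ}
    (h1 : 1 ∈ S) (hS : Finset.Ico 1 N ⊆ S) : Ico 0 1 ⊆ thickening ε (gridSet ε N S) := by
  intro x hx
  obtain ⟨l, hl, hxl⟩ := exists_mem_gridInterval hε hNε (Ico_subset_Icc_self hx)
  obtain ⟨h1l, hlN⟩ := Finset.mem_Icc.1 hl
  by_cases hlS : l ∈ S
  · exact self_subset_thickening hε _ (gridInterval_subset_gridSet hlS hxl)
  obtain rfl : l = N := by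
    by_contra h; exact hlS (hS (Finset.mem_Ico.2 ⟨h1l, by omega⟩))
  have hl1 : l ≠ 1 := by rintro rfl; exact hlS h1
  have hprev : l - 1 ∈ S := hS (Finset.mem_Ico.2 ⟨by omega, by omega⟩)
  refine ball_subset_thickening_of_mem_closure
    (closure_mono (gridInterval_subset_gridSet hprev)
      (mul_mem_closure_gridInterval hε (by omega))) _ ?_
  have hxl' := (gridInterval_subset_Icc hNε l hxl).1
  rw [Real.ball_eq_Ioo, Nat.cast_sub h1l]
  push_cast
  exact ⟨by linarith, by linarith [hx.2]⟩

theorem measure_gridSet_le_thickening [IsProbabilityMeasure P] (hε : 0 < ε) (hNε : 1 ≤ N * ε) (hN1 : ((N : ℝ) - 1) * ε < 1) (hP₀ : P₀ (Ico 0 1) = 1)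
    (hclose : ∀ j e, 1 ≤ j → j ≤ e → e ≤ N →
      P (gridSet ε N (Finset.Icc j e)) ≤ P₀ (gridSet ε N (Finset.Icc j e)) + m)
    (hmass : ∀ a, Ioo a (a + ε / 2) ⊆ Icc 0 1 → m ≤ P₀ (Ioo a (a + ε / 2)))
    {S : Finset ℕ} (hS : S ⊆ Finset.Icc 1 N) :
    P (gridSet ε N S) ≤ P₀ (thickening ε (gridSet ε N S)) := by
  by_cases hfull : 1 ∈ S ∧ Finset.Ico 1 N ⊆ S
  · calc P (gridSet ε N S) ≤ P₀ (Ico 0 1) := hP₀ ▸ prob_le_one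
      _ ≤ P₀ (thickening ε (gridSet ε N S)) :=
        measure_mono (Ico_subset_thickening_gridSet hε hNε hfull.1 hfull.2)
  · refine (measure_gridSet_le_thickening_half hε hNε hN1 hclose hmass S hS fun h1 => ?_).trans
      (measure_mono (thickening_mono (half_le_self hε.le) _))
    by_contra! h
    exact hfull ⟨h1, h⟩

open Classical in
noncomputable def gridCellsMeeting (ε : ℝ) (N : ℕ) (A : Set ℝ) : Finset ℕ :=
  (Finset.Icc 1 N).filter fun l => (gridInterval ε N l ∩ A).Nonempty

theorem gridCellsMeeting_subset_Icc (ε : ℝ) (N : ℕ) (A : Set ℝ) :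
    gridCellsMeeting ε N A ⊆ Finset.Icc 1 N := by
  classical
  exact Finset.filter_subset _ _

theorem inter_Icc_subset_gridSet_gridCellsMeeting (hε : 0 < ε) (hNε : 1 ≤ N * ε) (A : Set ℝ) :
    A ∩ Icc 0 1 ⊆ gridSet ε N (gridCellsMeeting ε N A) := by
  rintro x ⟨hxA, hx⟩
  obtain ⟨l, hl, hxl⟩ := exists_mem_gridInterval hε hNε hx
  classical
  exact gridInterval_subset_gridSet (Finset.mem_filter.2 ⟨hl, x, hxl, hxA⟩) hxl

theorem measure_le_measure_gridSet_gridCellsMeeting [IsProbabilityMeasure P] (hε : 0 < ε)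
    (hNε : 1 ≤ N * ε) (hP : P (Icc 0 1) = 1) (A : Set ℝ) :
    P A ≤ P (gridSet ε N (gridCellsMeeting ε N A)) := by
  refine measure_mono_ae ?_
  filter_upwards [ae_iff.2 ((prob_compl_eq_zero_iff measurableSet_Icc).2 hP)] with x hx hxA
  exact inter_Icc_subset_gridSet_gridCellsMeeting hε hNε A ⟨hxA, hx⟩

theorem gridSet_gridCellsMeeting_subset_cthickening (hNε : 1 ≤ N * ε) (A : Set ℝ) :
    gridSet ε N (gridCellsMeeting ε N A) ⊆ cthickening ε A := by
  refine iUnion₂_subset fun l hl x hx => ?_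
  classical
  obtain ⟨-, y, hy, hyA⟩ := Finset.mem_filter.1 hl
  have hIcc := gridInterval_subset_Icc hNε l
  refine mem_cthickening_of_dist_le x y ε A hyA ?_
  convert Real.dist_le_of_mem_Icc (hIcc hx) (hIcc hy) using 1
  ring

end Grid

theorem withDensity_indicator_Icc_eq_restrict (p₀ : ℝ → ℝ) :
    volume.withDensity (fun x => ENNReal.ofReal ((Icc (0 : ℝ) 1).indicator p₀ x)) =
      (volume.restrict (Icc 0 1)).withDensity fun x => ENNReal.ofReal (p₀ x) := by
  rw [← withDensity_indicator measurableSet_Icc]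
  congr 1
  funext x
  exact (congrFun (indicator_comp_of_zero ofReal_zero) x).symm

theorem withDensity_indicator_Icc_apply_Ico_compl (p₀ : ℝ → ℝ) :
    volume.withDensity (fun x => ENNReal.ofReal ((Icc (0 : ℝ) 1).indicator p₀ x)) (Ico 0 1)ᶜ
      = 0 := by
  rw [withDensity_indicator_Icc_eq_restrict]
  refine withDensity_absolutelyContinuous _ _ ?_
  rw [Measure.restrict_apply measurableSet_Ico.compl, ← sdiff_eq_compl_inter,
    Icc_sdiff_Ico_same zero_le_one]
  exact Real.volume_singleton

theorem ofReal_mul_volume_le_withDensity_indicator_Icc {c₀ : ℝ} {p₀ : ℝ → ℝ}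
    (hp₀ : ∀ x ∈ Icc (0 : ℝ) 1, c₀ ≤ p₀ x) {s : Set ℝ} (hs : MeasurableSet s) (hs01 : s ⊆ Icc 0 1) :
    ENNReal.ofReal c₀ * volume s ≤
      volume.withDensity (fun x => ENNReal.ofReal ((Icc (0 : ℝ) 1).indicator p₀ x)) s := by
  rw [withDensity_indicator_Icc_eq_restrict, ← Measure.restrict_eq_self volume hs01]
  exact Measure.const_mul_le_withDensity_apply _ hs fun x hx => ofReal_le_ofReal (hp₀ x (hs01 hx))

theorem WInf_le_of_grid_closeness_general
    (c₀ ε : ℝ) (hε : 0 < ε)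
    (p₀ : ℝ → ℝ) (hp₀ : ∀ x ∈ Set.Icc (0 : ℝ) 1, c₀ ≤ p₀ x)
    (P₀ : Measure ℝ) [IsProbabilityMeasure P₀]
    (hP₀ : P₀ = volume.withDensity
      (fun x => ENNReal.ofReal ((Set.Icc (0 : ℝ) 1).indicator p₀ x)))
    (P : Measure ℝ) [IsProbabilityMeasure P] (hP : P (Set.Icc (0 : ℝ) 1) = 1)
    (N : ℕ) (hN : N = ⌈1 / ε⌉₊)
    (hclose : ∀ j k : ℕ, 1 ≤ j → 1 ≤ k → j + k - 1 ≤ N →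
      (P (gridUnion ε N j k)).toReal - (P₀ (gridUnion ε N j k)).toReal
        ≤ c₀ * ε / 2) :
    ∀ A : Set ℝ, MeasurableSet A → P A ≤ P₀ (Metric.thickening (2 * ε) A) := by
  intro A _
  have hNε : 1 ≤ N * ε := hN ▸ one_le_natCeil_one_div_mul hε
  have hN1 : ((N : ℝ) - 1) * ε < 1 := hN ▸ natCeil_one_div_sub_one_mul_lt_one hε
  have hP₀Ico : P₀ (Ico 0 1) = 1 :=
    (prob_compl_eq_zero_iff measurableSet_Ico).1 (hP₀ ▸ withDensity_indicator_Icc_apply_Ico_compl p₀)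
  have hmass (a : ℝ) (ha : Ioo a (a + ε / 2) ⊆ Icc 0 1) :
      ENNReal.ofReal (c₀ * ε / 2) ≤ P₀ (Ioo a (a + ε / 2)) := by
    calc ENNReal.ofReal (c₀ * ε / 2) = ENNReal.ofReal c₀ * volume (Ioo a (a + ε / 2)) := by
          rw [Real.volume_Ioo, add_sub_cancel_left, ← ofReal_mul' (half_pos hε).le, mul_div_assoc]
      _ ≤ P₀ (Ioo a (a + ε / 2)) :=
          hP₀ ▸ ofReal_mul_volume_le_withDensity_indicator_Icc hp₀ measurableSet_Ioo ha
  have hclose' (j e : ℕ) (hj : 1 ≤ j) (hje : j ≤ e) (heN : e ≤ N) :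
      P (gridSet ε N (Finset.Icc j e)) ≤
        P₀ (gridSet ε N (Finset.Icc j e)) + ENNReal.ofReal (c₀ * ε / 2) := by
    rw [gridSet_Icc_eq_gridUnion hje]
    exact ENNReal.le_add_ofReal_of_toReal_sub_le (measure_ne_top _ _)
      (hclose j _ hj (by omega) (by omega))
  calc P A ≤ P (gridSet ε N (gridCellsMeeting ε N A)) :=
      measure_le_measure_gridSet_gridCellsMeeting hε hNε hP A
    _ ≤ P₀ (thickening ε (gridSet ε N (gridCellsMeeting ε N A))) :=
      measure_gridSet_le_thickening hε hNε hN1 hP₀Ico hclose' hmass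
        (gridCellsMeeting_subset_Icc ε N A)
    _ ≤ P₀ (thickening (2 * ε) A) := measure_mono <|
      (thickening_subset_of_subset ε (gridSet_gridCellsMeeting_subset_cthickening hNε A)).trans
        (two_mul ε ▸ thickening_cthickening_subset ε hε.le A)

/-- If `P₀` has a density `p₀ ≥ c₀ > 0` on `[0,1]` and a probability measure
`P` on `[0,1]` satisfies `P(I_{jk}) - P₀(I_{jk}) ≤ c₀ε/2` for all `j, k`, then
`W_∞(P, P₀) ≤ 2ε`, i.e. `P(A) ≤ P₀(A^{2ε})` for all Borel `A`. -/
theorem WInf_le_of_grid_closeness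
    (c₀ ε : ℝ) (hc₀ : 0 < c₀) (hε : 0 < ε)
    (p₀ : ℝ → ℝ) (hp₀ : ∀ x ∈ Set.Icc (0 : ℝ) 1, c₀ ≤ p₀ x)
    (P₀ : Measure ℝ) [IsProbabilityMeasure P₀]
    (hP₀ : P₀ = volume.withDensity
      (fun x => ENNReal.ofReal ((Set.Icc (0 : ℝ) 1).indicator p₀ x)))
    (P : Measure ℝ) [IsProbabilityMeasure P] (hP : P (Set.Icc (0 : ℝ) 1) = 1)
    (N : ℕ) (hN : N = ⌈1 / ε⌉₊)
    (hclose : ∀ j k : ℕ, 1 ≤ j → 1 ≤ k → j + k - 1 ≤ N →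
      (P (gridUnion ε N j k)).toReal - (P₀ (gridUnion ε N j k)).toReal
        ≤ c₀ * ε / 2) :
    ∀ A : Set ℝ, MeasurableSet A → P A ≤ P₀ (Metric.thickening (2 * ε) A) :=
  WInf_le_of_grid_closeness_general c₀ ε hε p₀ hp₀ P₀ hP₀ P hP N hN hclose
end
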